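/- arXiv:math/0210362 — 2 statements merged into one kernel-verified Lean document; each statement's English description precedes it below -/
import Mathlib

section
/- Let A be a subalgebra of a finite-dimensional k-algebra B such that J_A = J_B. Then for every A-module X, both the cokernel and the kernel of ε_X : X^- → X are semisimple A-modules. -/
noncomputable section

/-- The Jacobson radical of a ring, as a set. -/
def jacobsonSet (R : Type) [Ring R] : Set R := ((⊥ : Ideal R).jacobson : Set R)

section Restriction

variable (k B : Type) [Field k] [Ring B] [Algebra k B] (S : Subalgebra k B)

/-- Restriction of a `B`-module structure to the subalgebra `S ⊆ B`. -/
def restModule (N : Type) [AddCommGroup N] [Module B N] : Module ↥S N :=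
  Module.compHom N (S.val.toRingHom : ↥S →+* B)

variable (X : Type) [AddCommGroup X] [Module ↥S X]

/-- `X⁻ = Hom_A(B, X)` for an `A = S`-module `X`, where `B` is regarded as an
`A`-module by restriction; it is a left `B`-module via `(b • φ) x = φ (x * b)`. -/
def HomMinus : Type := B →ₗ[↥S] X

instance : AddCommGroup (HomMinus k B S X) :=
  inferInstanceAs (AddCommGroup (B →ₗ[↥S] X))

/-- The underlying `S`-linear map of an element of `X⁻`. -/
def HomMinus.toLin (φ : HomMinus k B S X) : B →ₗ[↥S] X := φ

instance : Module B (HomMinus k B S X) where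
  smul b φ := (HomMinus.toLin k B S X φ).comp (LinearMap.mulRight ↥S b)
  one_smul φ := LinearMap.ext fun x => by
    show HomMinus.toLin k B S X φ (x * 1) = HomMinus.toLin k B S X φ x
    rw [mul_one]
  mul_smul a b φ := LinearMap.ext fun x => by
    show HomMinus.toLin k B S X φ (x * (a * b)) = HomMinus.toLin k B S X φ ((x * a) * b)
    rw [mul_assoc]
  smul_zero a := LinearMap.ext fun _ => rfl
  smul_add a φ ψ := LinearMap.ext fun _ => rfl
  add_smul a b φ := LinearMap.ext fun x => by
    show HomMinus.toLin k B S X φ (x * (a + b)) =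
      HomMinus.toLin k B S X φ (x * a) + HomMinus.toLin k B S X φ (x * b)
    rw [mul_add, map_add]
  zero_smul φ := LinearMap.ext fun x => by
    show HomMinus.toLin k B S X φ (x * 0) = 0
    rw [mul_zero, map_zero]

lemma apply_coe_eq_smul_apply_one (φ : B →ₗ[↥S] X) (a : ↥S) :
    φ (a : B) = a • φ 1 := by
  have h : a • (1 : B) = (a : B) := by
    show (a : B) * 1 = (a : B)
    exact mul_one _
  rw [← h, map_smul]

/-- The evaluation map `ε_X : X⁻ → X`, `φ ↦ φ 1`, an `A = S`-module homomorphism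
(where `X⁻` is an `A`-module by restriction of its `B`-module structure). -/
def epsLin :
    letI := restModule k B S (HomMinus k B S X)
    HomMinus k B S X →ₗ[↥S] X :=
  letI := restModule k B S (HomMinus k B S X)
  { toFun := fun φ => HomMinus.toLin k B S X φ 1
    map_add' := fun _ _ => rfl
    map_smul' := by
      intro a φ
      show HomMinus.toLin k B S X φ ((1 : B) * (a : B)) =
        a • HomMinus.toLin k B S X φ 1
      rw [one_mul]
      exact apply_coe_eq_smul_apply_one k B S X (HomMinus.toLin k B S X φ) a }

variable (Y : Type) [AddCommGroup Y] [Module B Y]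

/-- The map `Hom_B(Y, X⁻) → Hom_A(Y, X)` sending `f` to the composite of `f`
followed by `ε_X`. -/
def transferMap (f : Y →ₗ[B] HomMinus k B S X) :
    letI := restModule k B S Y
    Y →ₗ[↥S] X :=
  letI := restModule k B S Y
  { toFun := fun y => HomMinus.toLin k B S X (f y) 1
    map_add' := fun y z => by
      show HomMinus.toLin k B S X (f (y + z)) 1 = _
      rw [map_add]
      rfl
    map_smul' := by
      intro a y
      show HomMinus.toLin k B S X (f ((a : B) • y)) 1 =
        a • HomMinus.toLin k B S X (f y) 1
      rw [map_smul]
      show HomMinus.toLin k B S X (f y) ((1 : B) * (a : B)) =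
        a • HomMinus.toLin k B S X (f y) 1
      rw [one_mul]
      exact apply_coe_eq_smul_apply_one k B S X (HomMinus.toLin k B S X (f y)) a }

end Restriction

end


open LinearMap Submodule

-- Step 1: in an artinian ring, the Jacobson radical is a finite inf of maximal ideals
lemma jacobson_eq_finset_inf (R : Type) [Ring R] [IsArtinianRing R] :
    ∃ s : Finset (Ideal R), (∀ m ∈ s, m.IsMaximal) ∧
      (⊥ : Ideal R).jacobson = s.inf (fun I => I) := by
  classical
  set P : Set (Ideal R) := {I | ∃ s : Finset (Ideal R), (∀ m ∈ s, m.IsMaximal) ∧ I = s.inf (fun I => I)}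
  have hPne : P.Nonempty := ⟨⊤, ∅, by simp⟩
  obtain ⟨I₀, ⟨s, hs, rfl⟩, hmin⟩ := (IsWellFounded.wf (r := ((· < ·) : Ideal R → Ideal R → Prop))).has_min P hPne
  refine ⟨s, hs, le_antisymm (Finset.le_inf fun m hm => sInf_le ⟨bot_le, hs m hm⟩) (le_sInf ?_)⟩
  rintro m ⟨-, hmax⟩
  have hmem : m ⊓ s.inf (fun I => I) ∈ P := ⟨insert m s, by
    intro x hx
    rcases Finset.mem_insert.mp hx with rfl | hx
    · exact hmax
    · exact hs x hx, by rw [Finset.inf_insert]⟩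
  have hle : m ⊓ s.inf (fun I => I) ≤ s.inf (fun I => I) := inf_le_right
  have heq : m ⊓ s.inf (fun I => I) = s.inf (fun I => I) :=
    (lt_or_eq_of_le hle).resolve_left (hmin _ hmem)
  calc s.inf (fun I => I) = m ⊓ s.inf (fun I => I) := heq.symm
    _ ≤ m := inf_le_left

lemma semisimple_of_jacobson_smul_eq_zero
    {R M : Type} [Ring R] [IsArtinianRing R] [AddCommGroup M] [Module R M]
    (h : ∀ a ∈ (⊥ : Ideal R).jacobson, ∀ m : M, a • m = 0) :
    IsSemisimpleModule R M := by
  classical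
  obtain ⟨s, hs, hJ⟩ := jacobson_eq_finset_inf R
  -- the quotient R / J is a semisimple R-module
  let f : R →ₗ[R] (∀ i : ↥s, R ⧸ (i : Ideal R)) := LinearMap.pi fun i => (i.1).mkQ
  have hker : ker f = (⊥ : Ideal R).jacobson := by
    rw [LinearMap.ker_pi, hJ]
    simp only [Submodule.ker_mkQ]
    rw [Finset.inf_eq_iInf, iInf_subtype]
  have hsimple : ∀ i : ↥s, IsSimpleModule R (R ⧸ (i.1 : Ideal R)) := fun i =>
    isSimpleModule_iff_isCoatom.mpr (Ideal.isMaximal_def.mp (hs i.1 i.2))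
  have hsemiPi : IsSemisimpleModule R (∀ i : ↥s, R ⧸ (i : Ideal R)) := by
    refine isSemisimpleModule_of_isSemisimpleModule_submodule'
      (p := fun i => LinearMap.range (LinearMap.single R (fun i : ↥s => R ⧸ (i : Ideal R)) i))
      (fun i => ?_) (LinearMap.iSup_range_single R _)
    have := hsimple i
    exact IsSemisimpleModule.range _
  have hRJ : IsSemisimpleModule R (R ⧸ (⊥ : Ideal R).jacobson) := by
    have hsub : IsSemisimpleModule R ↥(LinearMap.range f) := IsSemisimpleModule.submodule _ _
    have e : (R ⧸ (⊥ : Ideal R).jacobson) ≃ₗ[R] ↥(LinearMap.range f) :=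
      (Submodule.quotEquivOfEq _ _ hker.symm) ≪≫ₗ f.quotKerEquivRange
    exact IsSemisimpleModule.congr (M := ↥(LinearMap.range f)) e
  -- now M is a sup of images of R/J
  refine isSemisimpleModule_of_isSemisimpleModule_submodule'
    (p := fun m : M => LinearMap.range (((⊥ : Ideal R).jacobson).liftQ
      (LinearMap.toSpanSingleton R M m) (fun a ha => by
        simp only [LinearMap.mem_ker, LinearMap.toSpanSingleton_apply]
        exact h a ha m))) (fun m => IsSemisimpleModule.range _) ?_
  rw [eq_top_iff]
  intro m _
  refine Submodule.mem_iSup_of_mem m ?_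
  rw [Submodule.range_liftQ]
  exact ⟨1, one_smul R m⟩


/-- Let `A = S` be a subalgebra of the finite-dimensional `k`-algebra
`B` such that `J_A = J_B`.  Then for every `A`-module `X`, both the kernel and the
cokernel of `ε_X : X⁻ → X` are semisimple `A`-modules. -/
theorem kernel_cokernel_eps_semisimple
    (k B : Type) [Field k] [Ring B] [Algebra k B] [FiniteDimensional k B]
    (S : Subalgebra k B)
    (hJ : Subtype.val '' jacobsonSet ↥S = jacobsonSet B)
    (X : Type) [AddCommGroup X] [Module ↥S X] [Module.Finite ↥S X] :
    letI := restModule k B S (HomMinus k B S X)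
    IsSemisimpleModule ↥S ↥(LinearMap.ker (epsLin k B S X)) ∧
    IsSemisimpleModule ↥S (X ⧸ LinearMap.range (epsLin k B S X)) := by
  have hart : IsArtinianRing ↥S := isArtinian_of_tower k inferInstance
  have hcoeJ : ∀ a : ↥S, a ∈ (⊥ : Ideal ↥S).jacobson → ∀ b : B,
      b * (a : B) ∈ jacobsonSet B := by
    intro a ha b
    have h1 : (a : B) ∈ jacobsonSet B := by
      rw [← hJ]; exact ⟨a, ha, rfl⟩
    exact Ideal.mul_mem_left _ b h1
  constructor
  · -- kernel
    refine semisimple_of_jacobson_smul_eq_zero ?_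
    intro a ha v
    apply Subtype.ext
    show (a : ↥S) • (v : HomMinus k B S X) = 0
    refine LinearMap.ext fun b => ?_
    show HomMinus.toLin k B S X (v : HomMinus k B S X) (b * (a : B)) = 0
    have h2 : b * (a : B) ∈ Subtype.val '' jacobsonSet ↥S := by
      rw [hJ]; exact hcoeJ a ha b
    obtain ⟨t, ht, htv⟩ := h2
    rw [← htv, apply_coe_eq_smul_apply_one k B S X]
    have hv1 : HomMinus.toLin k B S X (v : HomMinus k B S X) 1 = 0 :=
      LinearMap.mem_ker.mp v.2
    rw [hv1, smul_zero]
  · -- cokernel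
    refine semisimple_of_jacobson_smul_eq_zero ?_
    intro a ha m
    obtain ⟨x, rfl⟩ := Submodule.Quotient.mk_surjective _ m
    rw [← Submodule.Quotient.mk_smul, Submodule.Quotient.mk_eq_zero]
    -- construct φ ∈ X⁻ with φ 1 = a • x
    have hmem : ∀ b : B, b * (a : B) ∈ S := by
      intro b
      have h2 : b * (a : B) ∈ Subtype.val '' jacobsonSet ↥S := by
        rw [hJ]; exact hcoeJ a ha b
      obtain ⟨t, _, htv⟩ := h2
      exact htv ▸ t.2
    let r : B →ₗ[↥S] ↥S :=
      { toFun := fun b => ⟨b * (a : B), hmem b⟩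
        map_add' := fun b c => Subtype.ext (add_mul b c (a : B))
        map_smul' := fun s b => Subtype.ext (by
          show (s • b) * (a : B) = (s : B) * (b * (a : B))
          show ((s : B) * b) * (a : B) = (s : B) * (b * (a : B))
          rw [mul_assoc]) }
    refine ⟨(LinearMap.toSpanSingleton ↥S X x).comp r, ?_⟩
    show (LinearMap.toSpanSingleton ↥S X x) (r 1) = a • x
    have h1 : r 1 = a := Subtype.ext (by
      show (1 : B) * (a : B) = (a : B)
      rw [one_mul])
    rw [h1, LinearMap.toSpanSingleton_apply]
end

section
/- Let A be a subalgebra of a finite-dimensional k-algebra B such that J_A = J_B. Let T = B ⊗_A − : mod(A) → mod(B) be induction and F : mod(B) → mod(A) restriction. Then for every B-module X, there is an isomorphism of B-modules T(F X) = B ⊗_A X ≅ X ⊕ S, where S is a semisimple B-module. -/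
/-! The counit `e : T → X` is split by `ι` as a map of `A`-modules. As `T` is spanned by `ι X` and
`J_B = J_A ⊆ A`, we get `J_B T ⊆ ι X`, on which `e` is injective; so `ker e ∩ J_B T = 0`.
Hence `J_B` kills `ker e`, which is therefore semisimple, and `ker e` maps injectively into the
semisimple module `T / J_B T`, where it has a complement; its preimage in `T` is a complement of
`ker e`, so `T ≅ X × ker e`. -/

theorem Disjoint.exists_isCompl_of_complementedLattice_Ici {α : Type*} [Lattice α]
    [BoundedOrder α] [IsModularLattice α] {a n : α} [ComplementedLattice (Set.Ici n)]
    (h : Disjoint a n) : ∃ c, IsCompl a c := by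
  obtain ⟨⟨c, hnc⟩, hc⟩ := ComplementedLattice.exists_isCompl (⟨a ⊔ n, le_sup_right⟩ : Set.Ici n)
  rw [Set.Ici.isCompl_iff] at hc
  refine ⟨c, ?_, ?_⟩
  · rw [disjoint_iff, eq_bot_iff, ← h.eq_bot]
    calc a ⊓ c ≤ a ⊓ ((a ⊔ n) ⊓ c) := le_inf inf_le_left (inf_le_inf_right c le_sup_left)
      _ = a ⊓ n := by rw [hc.1]
  · simpa only [codisjoint_iff, sup_assoc, sup_eq_right.mpr (Set.mem_Ici.mp hnc)] using hc.2

section Jacobson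

open Pointwise

variable {R M : Type*} [Ring R] [IsSemiprimaryRing R] [AddCommGroup M] [Module R M]

theorem isSemisimpleModule_of_isTorsionBySet_jacobson
    (h : Module.IsTorsionBySet R M (Ring.jacobson R)) : IsSemisimpleModule R M :=
  letI := h.module
  h.isSemisimpleModule_iff.mp inferInstance

theorem Submodule.isSemisimpleModule_of_disjoint_jacobson_smul_top {K : Submodule R M}
    (h : Disjoint K (Ring.jacobson R • ⊤)) : IsSemisimpleModule R K :=
  isSemisimpleModule_of_isTorsionBySet_jacobson fun k j ↦ Subtype.ext <|
    Submodule.disjoint_def.mp h _ (K.smul_mem j k.2) (Submodule.smul_mem_smul j.2 trivial)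

theorem Submodule.exists_isCompl_of_disjoint_jacobson_smul_top {K : Submodule R M}
    (h : Disjoint K (Ring.jacobson R • ⊤)) : ∃ C, IsCompl K C := by
  have : IsSemisimpleModule R (M ⧸ Ring.jacobson R • (⊤ : Submodule R M)) :=
    isSemisimpleModule_of_isTorsionBySet_jacobson
      (Module.isTorsionBySet_quotient_ideal_smul M _)
  have := (Submodule.comapMkQRelIso (Ring.jacobson R • (⊤ : Submodule R M))).complementedLattice
  exact h.exists_isCompl_of_complementedLattice_Ici

end Jacobson

section Retraction

variable {R X T : Type*} [Ring R] [AddCommGroup X] [Module R X] [AddCommGroup T] [Module R T]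

theorem Submodule.smul_top_le_range {I : Ideal R} [I.IsTwoSided] (ι : X →+ T)
    (hspan : Submodule.span R (Set.range ι) = ⊤) (hι : ∀ j ∈ I, ∀ x, ι (j • x) = j • ι x) :
    (I • ⊤ : Submodule R T).toAddSubgroup ≤ ι.range := by
  have hsmul (t : T) : ∀ j ∈ I, j • t ∈ ι.range := by
    induction (hspan ▸ Submodule.mem_top : t ∈ Submodule.span R (Set.range ι)) using
      Submodule.span_induction with
    | mem _ hx =>
      obtain ⟨x, rfl⟩ := hx
      exact fun j hj ↦ ⟨j • x, hι j hj x⟩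
    | zero =>
      intro j _
      rw [smul_zero]
      exact zero_mem _
    | add _ _ _ _ hu hv =>
      intro j hj
      rw [smul_add]
      exact add_mem (hu j hj) (hv j hj)
    | smul b _ _ hu =>
      intro j hj
      rw [← mul_smul]
      exact hu (j * b) (I.mul_mem_right b hj)
  exact fun t ht ↦ Submodule.smul_induction_on ht (fun j hj t _ ↦ hsmul t j hj)
    fun _ _ ↦ add_mem

theorem LinearMap.disjoint_ker_of_le_range {e : T →ₗ[R] X} {ι : X →+ T}
    (he : ∀ x, e (ι x) = x) {N : Submodule R T} (hN : N.toAddSubgroup ≤ ι.range) :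
    Disjoint (LinearMap.ker e) N := by
  refine Submodule.disjoint_def.mpr fun t ht htN ↦ ?_
  obtain ⟨x, rfl⟩ := hN htN
  rw [LinearMap.mem_ker, he] at ht
  rw [ht, map_zero]

end Retraction

section InducedModule

variable (k B : Type) [Field k] [Ring B] [Algebra k B] (S : Subalgebra k B)
  {X T : Type} [AddCommGroup X] [Module B X] [AddCommGroup T] [Module B T]

/-- `(T, ι)` is `(B ⊗_A X, x ↦ 1 ⊗ x)`, characterized by its universal property. -/
def IsInducedModule
    (ι : letI := restModule k B S X
         letI := restModule k B S T
         X →ₗ[↥S] T) : Prop :=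
  ∀ (Z : Type) (_ : AddCommGroup Z) (_ : Module B Z),
    letI := restModule k B S X
    letI := restModule k B S Z
    ∀ g : X →ₗ[↥S] Z, ∃! h : T →ₗ[B] Z, ∀ x : X, h (ι x) = g x

variable {k B S}

theorem IsInducedModule.span_range_eq_top
    {ι : letI := restModule k B S X
         letI := restModule k B S T
         X →ₗ[↥S] T}
    (hι : IsInducedModule k B S ι) : Submodule.span B (Set.range ι) = ⊤ := by
  set P := Submodule.span B (Set.range ι)
  obtain ⟨_, -, huniq⟩ := hι (T ⧸ P) inferInstance inferInstance 0
  have hmkQ : P.mkQ = 0 :=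
    (huniq _ fun x ↦ (Submodule.Quotient.mk_eq_zero P).mpr (Submodule.subset_span ⟨x, rfl⟩)).trans
      (huniq 0 fun _ ↦ rfl).symm
  rw [← Submodule.ker_mkQ P, hmkQ, LinearMap.ker_zero]

end InducedModule

theorem induction_of_restriction_iso_self_prod_semisimple_general
    (k B : Type) [Field k] [Ring B] [Algebra k B] [FiniteDimensional k B]
    (S : Subalgebra k B)
    (hJ : Subtype.val '' jacobsonSet ↥S = jacobsonSet B)
    (X : Type) [AddCommGroup X] [Module B X]
    (T : Type) [AddCommGroup T] [Module B T]
    (ι : letI := restModule k B S X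
         letI := restModule k B S T
         X →ₗ[↥S] T)
    (huniv : ∀ (Z : Type) (_ : AddCommGroup Z) (_ : Module B Z),
       letI := restModule k B S X
       letI := restModule k B S Z
       ∀ g : X →ₗ[↥S] Z, ∃! h : T →ₗ[B] Z, ∀ x : X, h (ι x) = g x) :
    ∃ (S' : Type) (_ : AddCommGroup S') (_ : Module B S'),
      IsSemisimpleModule B S' ∧ Nonempty (T ≃ₗ[B] X × S') := by
  have : IsArtinianRing B := isArtinian_of_tower k inferInstance
  obtain ⟨e, he, -⟩ := huniv X inferInstance inferInstance LinearMap.id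
  have hJS : ∀ j ∈ Ring.jacobson B, j ∈ S := by
    intro j hj
    rw [← Ideal.jacobson_bot, ← SetLike.mem_coe, ← jacobsonSet, ← hJ] at hj
    obtain ⟨a, -, rfl⟩ := hj
    exact a.2
  have hJT := Submodule.smul_top_le_range ι.toAddMonoidHom
    (IsInducedModule.span_range_eq_top huniv) fun j hj x ↦ (map_smul ι ⟨j, hJS j hj⟩ x :)
  have hK := LinearMap.disjoint_ker_of_le_range he hJT
  obtain ⟨C, hC⟩ := Submodule.exists_isCompl_of_disjoint_jacobson_smul_top hK
  refine ⟨LinearMap.ker e, inferInstance, inferInstance,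
    Submodule.isSemisimpleModule_of_disjoint_jacobson_smul_top hK, ⟨?_⟩⟩
  exact e.equivProdOfSurjectiveOfIsCompl ((LinearMap.ker e).projectionOnto C hC)
    (LinearMap.range_eq_top.mpr fun x ↦ ⟨ι x, he x⟩) (Submodule.range_projectionOnto hC)
    (by rwa [Submodule.ker_projectionOnto])

/-- Let `A = S` be a subalgebra of the finite-dimensional `k`-algebra
`B` such that `J_A = J_B`, and let `X` be a `B`-module.  Then the induced module
`T(FX) = B ⊗_A X` (encoded here by its universal property: `T` is a `B`-module with an
`A`-linear map `ι : X → T` through which every `A`-linear map from `X` to a `B`-module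
factors uniquely `B`-linearly) is isomorphic as a `B`-module to `X ⊕ S'` for some
semisimple `B`-module `S'`. -/
theorem induction_of_restriction_iso_self_prod_semisimple
    (k B : Type) [Field k] [Ring B] [Algebra k B] [FiniteDimensional k B]
    (S : Subalgebra k B)
    (hJ : Subtype.val '' jacobsonSet ↥S = jacobsonSet B)
    (X : Type) [AddCommGroup X] [Module B X] [Module.Finite B X]
    (T : Type) [AddCommGroup T] [Module B T]
    (ι : letI := restModule k B S X
         letI := restModule k B S T
         X →ₗ[↥S] T)
    (huniv : ∀ (Z : Type) (_ : AddCommGroup Z) (_ : Module B Z),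
       letI := restModule k B S X
       letI := restModule k B S Z
       ∀ g : X →ₗ[↥S] Z, ∃! h : T →ₗ[B] Z, ∀ x : X, h (ι x) = g x) :
    ∃ (S' : Type) (_ : AddCommGroup S') (_ : Module B S'),
      IsSemisimpleModule B S' ∧ Nonempty (T ≃ₗ[B] X × S') :=
  induction_of_restriction_iso_self_prod_semisimple_general k B S hJ X T ι huniv
end
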